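/- arXiv:2605.11976 — 6 statements merged into one kernel-verified Lean document; each statement's English description precedes it below -/
import Mathlib

section
/- Suppose f satisfies conditions (i), (ii) and (iii), and for u ∈ C(Ω̄) let L(u) : C(Ω̄) → L^p(Ω) denote the bounded linear operator (L(u)v)(x) := ∂_u f(x, u(x)) v(x). Then the map u ↦ L(u) is continuous from C(Ω̄) into the Banach space of bounded linear operators from C(Ω̄) to L^p(Ω) equipped with the operator norm. -/
open MeasureTheory ENNReal Classical

/-- The extension by zero of a continuous function on `closure Ω` to the whole space. -/
noncomputable def extendC {N : ℕ} (Ω : Set (Fin N → ℝ)) (u : C(closure Ω, ℝ)) :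
    (Fin N → ℝ) → ℝ :=
  fun x => if hx : x ∈ closure Ω then u ⟨x, hx⟩ else 0

/-!
The derivative `f'` is uniformly continuous in `u` on `K = [-(‖u₀‖ + 1), ‖u₀‖ + 1]`, relative to
the single weight `g_K ∈ L^p`. Hence `|f'(x, u(x)) - f'(x, u₀(x))| ≤ ε g_K(x)` as soon as
`‖u - u₀‖_∞` is small, and multiplying by `v(x)` bounds the operator norm of `L(u) - L(u₀)`
by `ε ‖g_K‖_p`.
-/

theorem ContinuousLinearMap.opNorm_le_of_ae_le_mul {α E F : Type*} [MeasurableSpace α]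
    {μ : Measure α} {p : ℝ≥0∞} [Fact (1 ≤ p)] [SeminormedAddCommGroup E] [NormedSpace ℝ E]
    [NormedAddCommGroup F] [NormedSpace ℝ F] (T : E →L[ℝ] Lp F p μ) (g : Lp ℝ p μ) {c : ℝ}
    (hc : 0 ≤ c) (h : ∀ v, ∀ᵐ x ∂μ, ‖T v x‖ ≤ c * ‖v‖ * ‖g x‖) : ‖T‖ ≤ c * ‖g‖ :=
  T.opNorm_le_bound (by positivity) fun v =>
    calc ‖T v‖ ≤ c * ‖v‖ * ‖g‖ := Lp.norm_le_mul_norm_of_ae_le_mul (h v)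
      _ = c * ‖g‖ * ‖v‖ := by ring

section extendC

variable {N : ℕ} {Ω : Set (Fin N → ℝ)} [CompactSpace (closure Ω)]

theorem abs_extendC_le (u : C(closure Ω, ℝ)) (x : Fin N → ℝ) : |extendC Ω u x| ≤ ‖u‖ := by
  unfold extendC
  split_ifs with hx
  · exact u.norm_coe_le_norm ⟨x, hx⟩
  · simp

theorem abs_extendC_sub_extendC_le (u v : C(closure Ω, ℝ)) (x : Fin N → ℝ) :
    |extendC Ω u x - extendC Ω v x| ≤ dist u v := by
  unfold extendC
  split_ifs with hx
  · exact ContinuousMap.dist_apply_le_dist (f := u) (g := v) ⟨x, hx⟩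
  · simp

theorem extendC_mem_Icc_of_dist_le {u u₀ : C(closure Ω, ℝ)} {r : ℝ} (h : dist u u₀ ≤ r)
    (x : Fin N → ℝ) : extendC Ω u x ∈ Set.Icc (-(‖u₀‖ + r)) (‖u₀‖ + r) :=
  abs_le.1 <| by
    linarith [abs_sub_abs_le_abs_sub (extendC Ω u x) (extendC Ω u₀ x), abs_extendC_le u₀ x,
      abs_extendC_sub_extendC_le u u₀ x]

end extendC

theorem superposition_derivative_continuous_general
    {N : ℕ} (Ω : Set (Fin N → ℝ))
    [CompactSpace (closure Ω)]
    (f f' : (Fin N → ℝ) → ℝ → ℝ) (p : ℝ≥0∞) [Fact (1 ≤ p)]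
    -- (ii) and (iii): local `L^p` domination and uniform continuity relative to `g_K`
    (hbound : ∀ K : Set ℝ, IsCompact K → ∃ g : (Fin N → ℝ) → ℝ,
      MemLp g p (volume.restrict Ω) ∧
      (∀ᵐ x ∂(volume.restrict Ω), ∀ y ∈ K, |f x y| + |f' x y| ≤ g x) ∧
      (∀ ε > (0:ℝ), ∃ δ > (0:ℝ), ∀ᵐ x ∂(volume.restrict Ω), ∀ y ∈ K, ∀ z ∈ K,
        |y - z| ≤ δ → |f x y - f x z| + |f' x y - f' x z| ≤ ε * g x))
    -- the operator family `L`
    (L : C(closure Ω, ℝ) → (C(closure Ω, ℝ) →L[ℝ] Lp ℝ p (volume.restrict Ω)))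
    (hL : ∀ u v : C(closure Ω, ℝ),
      ⇑(L u v) =ᵐ[volume.restrict Ω]
        fun x => f' x (extendC Ω u x) * extendC Ω v x) :
    Continuous L := by
  refine (Metric.continuous_iff' (f := L)).2 fun u₀ ε hε => ?_
  obtain ⟨g, hg, -, hunif⟩ := hbound (Set.Icc (-(‖u₀‖ + 1)) (‖u₀‖ + 1)) isCompact_Icc
  set G := hg.toLp g
  set η := ε / (‖G‖ + 1)
  obtain ⟨δ, hδ, hδae⟩ := hunif η (by positivity)
  filter_upwards [Metric.ball_mem_nhds u₀ (lt_min hδ one_pos)] with u hu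
  obtain ⟨huδ, hu1⟩ := le_min_iff.1 (Metric.mem_ball.1 hu).le
  have hpt : ∀ v, ∀ᵐ x ∂(volume.restrict Ω), ‖(L u - L u₀) v x‖ ≤ η * ‖v‖ * ‖G x‖ := by
    intro v
    filter_upwards [Lp.coeFn_sub (L u v) (L u₀ v), hL u v, hL u₀ v, hδae, hg.coeFn_toLp]
      with x hsub hLu hLu₀ hx hGx
    have hf' := le_of_add_le_of_nonneg_right
      (hx _ (extendC_mem_Icc_of_dist_le hu1 x) _
        (extendC_mem_Icc_of_dist_le ((dist_self u₀).trans_le zero_le_one) x)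
        ((abs_extendC_sub_extendC_le u u₀ x).trans huδ)) (abs_nonneg _)
    rw [sub_apply, hsub, Pi.sub_apply, hLu, hLu₀, hGx, ← sub_mul,
      Real.norm_eq_abs, Real.norm_eq_abs, abs_mul, mul_right_comm]
    exact mul_le_mul (hf'.trans (by gcongr; exact le_abs_self _)) (abs_extendC_le v x)
      (abs_nonneg _) (by positivity)
  calc dist (L u) (L u₀) = ‖L u - L u₀‖ := dist_eq_norm (L u) (L u₀)
    _ ≤ η * ‖G‖ := (L u - L u₀).opNorm_le_of_ae_le_mul G (by positivity) hpt
    _ < ε := by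
      rw [div_mul_eq_mul_div, div_lt_iff₀ (by positivity)]
      linarith

/-- Under conditions (i), (ii) and (iii), the map `u ↦ L(u)`, where
`(L(u)v)(x) = ∂_u f(x, u(x)) v(x)`, is continuous from `C(Ω̄)` into the space of bounded
linear operators `C(Ω̄) → L^p(Ω)` with the operator norm. -/
theorem superposition_derivative_continuous
    {N : ℕ} (Ω : Set (Fin N → ℝ)) (hΩo : IsOpen Ω) (hΩb : Bornology.IsBounded Ω)
    [CompactSpace (closure Ω)]
    (f f' : (Fin N → ℝ) → ℝ → ℝ) (p : ℝ≥0∞) (hp : 2 ≤ p) [Fact (1 ≤ p)]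
    -- (i): a.e. differentiability in `u`, measurability in `x`
    (hdiff : ∀ᵐ x ∂(volume.restrict Ω), ∀ y : ℝ, HasDerivAt (f x) (f' x y) y)
    (hmeas : ∀ y : ℝ, AEMeasurable (fun x => f x y) (volume.restrict Ω))
    -- (ii) and (iii): local `L^p` domination and uniform continuity relative to `g_K`
    (hbound : ∀ K : Set ℝ, IsCompact K → ∃ g : (Fin N → ℝ) → ℝ,
      MemLp g p (volume.restrict Ω) ∧
      (∀ᵐ x ∂(volume.restrict Ω), ∀ y ∈ K, |f x y| + |f' x y| ≤ g x) ∧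
      (∀ ε > (0:ℝ), ∃ δ > (0:ℝ), ∀ᵐ x ∂(volume.restrict Ω), ∀ y ∈ K, ∀ z ∈ K,
        |y - z| ≤ δ → |f x y - f x z| + |f' x y - f' x z| ≤ ε * g x))
    -- the operator family `L`
    (L : C(closure Ω, ℝ) → (C(closure Ω, ℝ) →L[ℝ] Lp ℝ p (volume.restrict Ω)))
    (hL : ∀ u v : C(closure Ω, ℝ),
      ⇑(L u v) =ᵐ[volume.restrict Ω]
        fun x => f' x (extendC Ω u x) * extendC Ω v x) :
    Continuous L :=
  superposition_derivative_continuous_general Ω f f' p hbound L hL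
end

section
/- Let Ω ⊂ ℝ^N be a bounded open set, p ≥ 2, g ∈ L^p(Ω) and h ∈ C¹(ℝ^n) (a continuously differentiable function h : ℝ^n → ℝ). Then the map which sends u ∈ C(Ω̄; ℝ^n) to the function x ↦ g(x) h(u(x)) is a continuously Fréchet differentiable (C¹) map from C(Ω̄; ℝ^n) into L^p(Ω), and its Fréchet derivative at u applied to v ∈ C(Ω̄; ℝ^n) is the function x ↦ g(x) ∇h(u(x)) · v(x). -/
open MeasureTheory ENNReal Classical

/-- The extension by zero of a continuous `ℝ^n`-valued function on `closure Ω`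
to the whole space. -/
noncomputable def extendV {N n : ℕ} (Ω : Set (Fin N → ℝ)) (u : C(closure Ω, Fin n → ℝ)) :
    (Fin N → ℝ) → (Fin n → ℝ) :=
  fun x => if hx : x ∈ closure Ω then u ⟨x, hx⟩ else 0

/-!
The map is `u ↦ M_g (h ∘ u)`, where multiplication by `g` is a bounded linear map
`M_g : C(Ω̄) → L^p(Ω)` because `‖g φ‖_p ≤ ‖φ‖_∞ ‖g‖_p`. Post-composition `u ↦ h ∘ u` is `C¹` on
`C(K, E)` for compact `K`: `h'` is uniformly continuous near the compact range of `u`, so the mean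
value inequality bounds `h (u + v) - h u - h' (u) v` by `o(‖v‖)` uniformly on `K`; the derivative
`v ↦ h' (u) v` is the pointwise application of `h' ∘ u`, which is a bounded bilinear operation,
so it depends continuously on `u`.
-/

theorem IsCompact.exists_pos_forall_dist_lt {X Y : Type*} [PseudoMetricSpace X]
    [PseudoMetricSpace Y] {S : Set X} (hS : IsCompact S) {f : X → Y}
    (hf : ∀ a ∈ S, ContinuousAt f a) {ε : ℝ} (hε : 0 < ε) :
    ∃ δ > 0, ∀ a ∈ S, ∀ b, dist a b < δ → dist (f a) (f b) < ε := by
  obtain ⟨δ, hδ, hδε⟩ := Metric.mem_uniformity_dist.mp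
    (hS.uniformContinuousAt_of_continuousAt f hf (Metric.dist_mem_uniformity hε))
  exact ⟨δ, hδ, fun a ha b hab => hδε hab ha⟩

noncomputable def ContDiff.continuousMapFDeriv {E F : Type*} [NormedAddCommGroup E]
    [NormedSpace ℝ E] [NormedAddCommGroup F] [NormedSpace ℝ F] {f : E → F}
    (hf : ContDiff ℝ 1 f) : C(E, E →L[ℝ] F) :=
  ⟨fderiv ℝ f, hf.continuous_fderiv one_ne_zero⟩

namespace ContinuousMap

variable {K : Type*} [TopologicalSpace K] [CompactSpace K]

section PointwiseApply

variable {𝕜 E F : Type*} [NontriviallyNormedField 𝕜] [NormedAddCommGroup E] [NormedSpace 𝕜 E]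
  [NormedAddCommGroup F] [NormedSpace 𝕜 F]

variable (K 𝕜 E F) in
noncomputable def pointwiseApplyL : C(K, E →L[𝕜] F) →L[𝕜] C(K, E) →L[𝕜] C(K, F) :=
  LinearMap.mkContinuous₂
    (LinearMap.mk₂ 𝕜 (fun (A : C(K, E →L[𝕜] F)) (v : C(K, E)) =>
        (⟨fun x => A x (v x), by fun_prop⟩ : C(K, F)))
      (fun _ _ _ => by ext; simp) (fun _ _ _ => by ext; simp)
      (fun _ _ _ => by ext; simp) (fun _ _ _ => by ext; simp))
    1 fun A v => by
      rw [one_mul]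
      refine (norm_le _ (mul_nonneg (norm_nonneg A) (norm_nonneg v))).mpr fun x => ?_
      exact (A x).le_of_opNorm_le_of_le (A.norm_coe_le_norm x) (v.norm_coe_le_norm x)

@[simp]
theorem pointwiseApplyL_apply (A : C(K, E →L[𝕜] F)) (v : C(K, E)) (x : K) :
    pointwiseApplyL K 𝕜 E F A v x = A x (v x) := rfl

end PointwiseApply

section Postcomp

variable {E F : Type*} [NormedAddCommGroup E] [NormedSpace ℝ E]
  [NormedAddCommGroup F] [NormedSpace ℝ F] {f : C(E, F)}

theorem hasFDerivAt_postcomp (hf : ContDiff ℝ 1 f) (u : C(K, E)) :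
    HasFDerivAt (fun w : C(K, E) => f.comp w)
      (pointwiseApplyL K ℝ E F (hf.continuousMapFDeriv.comp u)) u := by
  rw [hasFDerivAt_iff_isLittleO_nhds_zero, Asymptotics.isLittleO_iff]
  intro c hc
  obtain ⟨δ, hδ, hfderiv⟩ := (isCompact_range u.continuous).exists_pos_forall_dist_lt
    (fun _ _ => (hf.continuous_fderiv one_ne_zero).continuousAt) hc
  filter_upwards [Metric.ball_mem_nhds 0 hδ] with v hv
  rw [mem_ball_zero_iff] at hv
  refine (norm_le _ (by positivity)).mpr fun x => ?_
  have hvx : u x + v x ∈ Metric.ball (u x) δ := by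
    simpa using (v.norm_coe_le_norm x).trans_lt hv
  have hbound : ∀ z ∈ Metric.ball (u x) δ, ‖fderiv ℝ f z - fderiv ℝ f (u x)‖ ≤ c := by
    intro z hz
    rw [← dist_eq_norm']
    exact (hfderiv _ ⟨x, rfl⟩ z (Metric.mem_ball'.mp hz)).le
  have hmvt := (convex_ball (u x) δ).norm_image_sub_le_of_norm_fderiv_le'
    (fun z _ => (hf.differentiable one_ne_zero) z) hbound (Metric.mem_ball_self hδ) hvx
  rw [add_sub_cancel_left] at hmvt
  exact hmvt.trans (mul_le_mul_of_nonneg_left (v.norm_coe_le_norm x) hc.le)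

theorem contDiff_postcomp (hf : ContDiff ℝ 1 f) :
    ContDiff ℝ 1 (fun w : C(K, E) => f.comp w) := by
  rw [contDiff_one_iff_fderiv]
  refine ⟨fun u => (hasFDerivAt_postcomp hf u).differentiableAt, ?_⟩
  rw [funext fun u => (hasFDerivAt_postcomp hf u).fderiv]
  exact (pointwiseApplyL K ℝ E F).continuous.comp (continuous_postcomp _)

end Postcomp

end ContinuousMap

section ZeroExtend

variable {α : Type*} [TopologicalSpace α] {s : Set α}

noncomputable def zeroExtend {E : Type*} [TopologicalSpace E] [Zero E] (s : Set α)
    (φ : C(closure s, E)) : α → E :=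
  fun x => if hx : x ∈ closure s then φ ⟨x, hx⟩ else 0

theorem zeroExtend_of_mem {E : Type*} [TopologicalSpace E] [Zero E] (φ : C(closure s, E))
    {x : α} (hx : x ∈ closure s) : zeroExtend s φ x = φ ⟨x, hx⟩ :=
  dif_pos hx

theorem zeroExtend_add {E : Type*} [TopologicalSpace E] [AddZeroClass E] [ContinuousAdd E]
    (φ ψ : C(closure s, E)) : zeroExtend s (φ + ψ) = zeroExtend s φ + zeroExtend s ψ := by
  funext x
  by_cases hx : x ∈ closure s <;> simp [zeroExtend, hx]

theorem zeroExtend_smul {𝕜 E : Type*} [TopologicalSpace 𝕜] [TopologicalSpace E] [Zero E]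
    [SMulZeroClass 𝕜 E] [ContinuousSMul 𝕜 E] (c : 𝕜) (φ : C(closure s, E)) :
    zeroExtend s (c • φ) = c • zeroExtend s φ := by
  funext x
  by_cases hx : x ∈ closure s <;> simp [zeroExtend, hx]

theorem norm_zeroExtend_le {E : Type*} [NormedAddCommGroup E] [CompactSpace (closure s)]
    (φ : C(closure s, E)) (x : α) : ‖zeroExtend s φ x‖ ≤ ‖φ‖ := by
  by_cases hx : x ∈ closure s
  · rw [zeroExtend_of_mem φ hx]
    exact φ.norm_coe_le_norm _
  · simp [zeroExtend, hx]

theorem measurable_zeroExtend [MeasurableSpace α] [OpensMeasurableSpace α] {E : Type*}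
    [TopologicalSpace E] [Zero E] [MeasurableSpace E] [BorelSpace E] (φ : C(closure s, E)) : Measurable (zeroExtend s φ) :=
  Measurable.dite φ.continuous.measurable measurable_const isClosed_closure.measurableSet

end ZeroExtend

theorem ae_restrict_mem_closure {α : Type*} [TopologicalSpace α] [MeasurableSpace α]
    [OpensMeasurableSpace α] (μ : Measure α) (s : Set α) :
    ∀ᵐ x ∂μ.restrict s, x ∈ closure s :=
  ae_mono (Measure.restrict_mono subset_closure le_rfl)
    (ae_restrict_mem isClosed_closure.measurableSet)

section MulZeroExtend

variable {α : Type*} [TopologicalSpace α] [MeasurableSpace α] [OpensMeasurableSpace α]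
  {μ : Measure α} {s : Set α} [CompactSpace (closure s)] {p : ℝ≥0∞} {g : α → ℝ}

theorem memLp_mul_zeroExtend (hg : MemLp g p μ) (φ : C(closure s, ℝ)) :
    MemLp (fun x => g x * zeroExtend s φ x) p μ :=
  hg.of_le_mul (hg.1.mul (measurable_zeroExtend φ).aestronglyMeasurable) <|
    ae_of_all _ fun x => by
      rw [norm_mul, mul_comm]
      exact mul_le_mul_of_nonneg_right (norm_zeroExtend_le φ x) (norm_nonneg _)

variable [Fact (1 ≤ p)]

noncomputable def mulZeroExtendL (hg : MemLp g p μ) : C(closure s, ℝ) →L[ℝ] Lp ℝ p μ :=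
  LinearMap.mkContinuous
    { toFun := fun φ => (memLp_mul_zeroExtend hg φ).toLp
      map_add' := fun φ ψ => by
        rw [← MemLp.toLp_add]
        exact MemLp.toLp_congr _ _ (ae_of_all _ fun x => by simp [zeroExtend_add, mul_add])
      map_smul' := fun c φ => by
        rw [RingHom.id_apply, ← MemLp.toLp_const_smul]
        exact MemLp.toLp_congr _ _ (ae_of_all _ fun x => by
          simp [zeroExtend_smul, mul_left_comm]) }
    ‖hg.toLp g‖ fun φ => by
      rw [mul_comm]
      refine Lp.norm_le_mul_norm_of_ae_le_mul ?_
      filter_upwards [(memLp_mul_zeroExtend hg φ).coeFn_toLp, hg.coeFn_toLp] with x hgφ hg'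
      simp only [LinearMap.coe_mk, AddHom.coe_mk, hgφ, hg', norm_mul, mul_comm ‖φ‖]
      exact mul_le_mul_of_nonneg_left (norm_zeroExtend_le φ x) (norm_nonneg _)

theorem coeFn_mulZeroExtendL (hg : MemLp g p μ) (φ : C(closure s, ℝ)) :
    ⇑(mulZeroExtendL hg φ) =ᵐ[μ] fun x => g x * zeroExtend s φ x :=
  (memLp_mul_zeroExtend hg φ).coeFn_toLp

end MulZeroExtend

theorem product_nonlinearity_contDiff_general
    {N n : ℕ} (Ω : Set (Fin N → ℝ))
    [CompactSpace (closure Ω)]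
    (p : ℝ≥0∞) [Fact (1 ≤ p)]
    (g : (Fin N → ℝ) → ℝ) (hg : MemLp g p (volume.restrict Ω))
    (h : (Fin n → ℝ) → ℝ) (hh : ContDiff ℝ 1 h) :
    ∃ (F : C(closure Ω, Fin n → ℝ) → Lp ℝ p (volume.restrict Ω))
      (F' : C(closure Ω, Fin n → ℝ) →
        (C(closure Ω, Fin n → ℝ) →L[ℝ] Lp ℝ p (volume.restrict Ω))),
      ContDiff ℝ 1 F ∧
      (∀ u, ⇑(F u) =ᵐ[volume.restrict Ω] fun x => g x * h (extendV Ω u x)) ∧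
      (∀ u, HasFDerivAt F (F' u) u) ∧
      (∀ u v, ⇑(F' u v) =ᵐ[volume.restrict Ω]
        fun x => g x * fderiv ℝ h (extendV Ω u x) (extendV Ω v x)) := by
  let H : C(Fin n → ℝ, ℝ) := ⟨h, hh.continuous⟩
  have hH : ContDiff ℝ 1 H := hh
  let M := mulZeroExtendL (s := Ω) hg
  refine ⟨fun u => M (H.comp u),
    fun u => M.comp (ContinuousMap.pointwiseApplyL _ ℝ _ _ (hH.continuousMapFDeriv.comp u)),
    M.contDiff.comp (ContinuousMap.contDiff_postcomp hH), fun u => ?_,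
    fun u => M.hasFDerivAt.comp u (ContinuousMap.hasFDerivAt_postcomp hH u), fun u v => ?_⟩
  all_goals
    refine (coeFn_mulZeroExtendL hg _).trans ?_
    filter_upwards [ae_restrict_mem_closure volume Ω] with x hx
    simp [zeroExtend_of_mem _ hx, extendV, hx, H, ContDiff.continuousMapFDeriv]

/-- For a bounded open `Ω ⊂ ℝ^N`, `p ≥ 2`, `g ∈ L^p(Ω)` and
`h ∈ C¹(ℝ^n)`, the map `u ↦ (x ↦ g(x) h(u(x)))` is a `C¹` map from `C(Ω̄; ℝ^n)` into
`L^p(Ω)`, and its Fréchet derivative at `u` applied to `v` is `x ↦ g(x) ∇h(u(x)) · v(x)`. -/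
theorem product_nonlinearity_contDiff
    {N n : ℕ} (Ω : Set (Fin N → ℝ)) (hΩo : IsOpen Ω) (hΩb : Bornology.IsBounded Ω)
    [CompactSpace (closure Ω)]
    (p : ℝ≥0∞) (hp : 2 ≤ p) [Fact (1 ≤ p)]
    (g : (Fin N → ℝ) → ℝ) (hg : MemLp g p (volume.restrict Ω))
    (h : (Fin n → ℝ) → ℝ) (hh : ContDiff ℝ 1 h) :
    ∃ (F : C(closure Ω, Fin n → ℝ) → Lp ℝ p (volume.restrict Ω))
      (F' : C(closure Ω, Fin n → ℝ) →
        (C(closure Ω, Fin n → ℝ) →L[ℝ] Lp ℝ p (volume.restrict Ω))),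
      ContDiff ℝ 1 F ∧
      (∀ u, ⇑(F u) =ᵐ[volume.restrict Ω] fun x => g x * h (extendV Ω u x)) ∧
      (∀ u, HasFDerivAt F (F' u) u) ∧
      (∀ u v, ⇑(F' u v) =ᵐ[volume.restrict Ω]
        fun x => g x * fderiv ℝ h (extendV Ω u x) (extendV Ω v x)) :=
  product_nonlinearity_contDiff_general Ω p g hg h hh
end

section
/- In the abstract setting described in the context, there exist r₀ > 0 and ε₁ ∈ (0, ε₀] such that for every ε ∈ (0, ε₁] and all u₁, u₂ ∈ U with ‖u₁ − ū_ε‖_U ≤ r₀ and ‖u₂ − ū_ε‖_U ≤ r₀ one has ‖G_ε(u₁) − G_ε(u₂)‖_U ≤ ½ ‖u₁ − u₂‖_U; that is, G_ε is a strict contraction with constant ½ on the closed ball of radius r₀ around ū_ε. -/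
open Filter Set

/-- abstract setting of Section 3 of the paper. There exist `r₀ > 0`
and `ε₁ ∈ (0, ε₀]` such that for every `ε ∈ (0, ε₁]` the map `G_ε` is a strict
contraction with constant `1/2` on the closed ball of radius `r₀` around `ū_ε`. -/
theorem abstract_contraction
    {U X Y V : Type*}
    [NormedAddCommGroup U] [NormedSpace ℝ U] [CompleteSpace U]
    [NormedAddCommGroup X] [NormedSpace ℝ X] [CompleteSpace X]
    [NormedAddCommGroup Y] [NormedSpace ℝ Y] [CompleteSpace Y]
    [NormedAddCommGroup V] [NormedSpace ℝ V] [CompleteSpace V]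
    (ι : U →L[ℝ] X) (hι : Function.Injective ι)
    (D : Y →L[ℝ] V)
    (F : X → Y) (F' : X → (X →L[ℝ] Y))
    (hF : ∀ x, HasFDerivAt F (F' x) x) (hF' : Continuous F')
    (u₀ : X) (ε₀ : ℝ) (hε₀ : 0 < ε₀)
    (A : ℝ → (U →L[ℝ] V)) (Tinv : ℝ → (V →L[ℝ] U))
    -- `T_ε := A_ε + D ∘ F'(u₀) ∘ ι` is bijective with inverse `Tinv ε` ...
    (hT : ∀ ε ∈ Ioc (0:ℝ) ε₀, ∀ u : U,
      Tinv ε ((A ε + D.comp ((F' u₀).comp ι)) u) = u)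
    (hT' : ∀ ε ∈ Ioc (0:ℝ) ε₀, ∀ v : V,
      (A ε + D.comp ((F' u₀).comp ι)) (Tinv ε v) = v)
    -- ... uniformly bounded by `M`
    (M : ℝ) (hM : ∀ ε ∈ Ioc (0:ℝ) ε₀, ‖Tinv ε‖ ≤ M)
    -- the approximate solutions `ū_ε`
    (ubar : ℝ → U)
    (hubar : Tendsto (fun ε => ‖ι (ubar ε) - u₀‖) (nhdsWithin 0 (Ioi 0)) (nhds 0))
    (hdelta : Tendsto (fun ε => ‖A ε (ubar ε) + D (F (ι (ubar ε)))‖)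
      (nhdsWithin 0 (Ioi 0)) (nhds 0))
    -- the fixed point maps `G_ε`
    (G : ℝ → U → U)
    (hG : ∀ ε, ∀ u : U, G ε u = Tinv ε (D (F' u₀ (ι u) - F (ι u)))) :
    ∃ r₀ > (0:ℝ), ∃ ε₁ ∈ Ioc (0:ℝ) ε₀, ∀ ε ∈ Ioc (0:ℝ) ε₁, ∀ u₁ u₂ : U,
      ‖u₁ - ubar ε‖ ≤ r₀ → ‖u₂ - ubar ε‖ ≤ r₀ →
      ‖G ε u₁ - G ε u₂‖ ≤ (1/2 : ℝ) * ‖u₁ - u₂‖ := by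

  have hM0 : 0 ≤ M := le_trans (norm_nonneg _) (hM ε₀ ⟨hε₀, le_refl _⟩)
  set κ : ℝ := (2*(M+1)*(‖D‖+1)*(‖ι‖+1))⁻¹ with hκdef
  have hκ : 0 < κ := by
    apply inv_pos.mpr
    have h1 : (0:ℝ) < M+1 := by linarith
    have h2 : (0:ℝ) < ‖D‖+1 := by have := norm_nonneg D; linarith
    have h3 : (0:ℝ) < ‖ι‖+1 := by have := norm_nonneg ι; linarith
    positivity
  obtain ⟨δ, hδpos, hδ⟩ := Metric.continuous_iff.mp hF' u₀ κ hκ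
  set η : ℝ := δ/2 with hηdef
  have hηpos : 0 < η := by positivity
  set r₀ : ℝ := η/(2*(‖ι‖+1)) with hr₀def
  have hιpos : (0:ℝ) < ‖ι‖+1 := by have := norm_nonneg ι; linarith
  have hr₀pos : 0 < r₀ := by positivity
  obtain ⟨δ', hδ'pos, hδ'⟩ := Metric.tendsto_nhdsWithin_nhds.mp hubar (η/2) (by positivity)
  refine ⟨r₀, hr₀pos, min (δ'/2) ε₀, ⟨lt_min (by positivity) hε₀, min_le_right _ _⟩, ?_⟩
  intro ε hε u₁ u₂ h1 h2
  have hεIoc : ε ∈ Ioc 0 ε₀ := ⟨hε.1, hε.2.trans (min_le_right _ _)⟩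
  have hbar : ‖ι (ubar ε) - u₀‖ < η/2 := by
    have hd : dist ε 0 < δ' := by
      rw [Real.dist_eq, sub_zero, abs_of_pos hε.1]
      have : ε ≤ δ'/2 := hε.2.trans (min_le_left _ _)
      linarith
    have := hδ' (mem_Ioi.mpr hε.1) hd
    rwa [Real.dist_eq, sub_zero, abs_of_nonneg (norm_nonneg _)] at this
  -- both points are in the closed ball of radius η around u₀
  have hmem : ∀ u : U, ‖u - ubar ε‖ ≤ r₀ → ι u ∈ Metric.closedBall u₀ η := by
    intro u hu
    rw [Metric.mem_closedBall, dist_eq_norm]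
    have e1 : ι u - u₀ = ι (u - ubar ε) + (ι (ubar ε) - u₀) := by
      rw [map_sub]; abel
    have e2 : ‖ι (u - ubar ε)‖ ≤ ‖ι‖ * r₀ := by
      calc ‖ι (u - ubar ε)‖ ≤ ‖ι‖ * ‖u - ubar ε‖ := ι.le_opNorm _
        _ ≤ ‖ι‖ * r₀ := by
          exact mul_le_mul_of_nonneg_left hu (norm_nonneg _)
    have e3 : ‖ι‖ * r₀ ≤ η/2 := by
      rw [hr₀def, mul_div_assoc']
      rw [div_le_div_iff₀ (by positivity) (by norm_num : (0:ℝ) < 2)]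
      nlinarith [hηpos.le, norm_nonneg ι]
    calc ‖ι u - u₀‖ ≤ ‖ι (u - ubar ε)‖ + ‖ι (ubar ε) - u₀‖ := by
          rw [e1]; exact norm_add_le _ _
      _ ≤ η/2 + η/2 := add_le_add (e2.trans e3) hbar.le
      _ = η := by ring
  -- mean value inequality for g x = F' u₀ x - F x on the ball
  have hMVT : ‖(F' u₀ (ι u₁) - F (ι u₁)) - (F' u₀ (ι u₂) - F (ι u₂))‖
      ≤ κ * ‖ι u₁ - ι u₂‖ := by
    have := Convex.norm_image_sub_le_of_norm_hasFDerivWithin_le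
      (f := fun x => F' u₀ x - F x) (f' := fun x => F' u₀ - F' x)
      (s := Metric.closedBall u₀ η) (C := κ)
      (fun x hx => (((F' u₀).hasFDerivAt).sub (hF x)).hasFDerivWithinAt)
      (fun x hx => by
        have hxδ : dist x u₀ < δ := lt_of_le_of_lt (Metric.mem_closedBall.mp hx) (by
          rw [hηdef]; linarith)
        have := hδ x hxδ
        rw [dist_eq_norm] at this
        calc ‖F' u₀ - F' x‖ = ‖F' x - F' u₀‖ := norm_sub_rev _ _
          _ ≤ κ := this.le)
      (convex_closedBall _ _) (hmem u₂ h2) (hmem u₁ h1)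
    simpa using this
  -- final estimate
  rw [hG, hG, ← map_sub, ← map_sub]
  have key : M * ‖D‖ * κ * ‖ι‖ ≤ 1/2 := by
    have hprod : (0:ℝ) < 2*(M+1)*(‖D‖+1)*(‖ι‖+1) := by
      have h2 : (0:ℝ) < ‖D‖+1 := by have := norm_nonneg D; linarith
      have h1 : (0:ℝ) < M+1 := by linarith
      positivity
    rw [hκdef]
    rw [mul_comm (M * ‖D‖) _, mul_assoc]
    rw [inv_mul_le_iff₀ hprod]
    have hD0 := norm_nonneg D
    have hι0 := norm_nonneg ι
    nlinarith [mul_nonneg hM0 hD0, mul_nonneg (mul_nonneg hM0 hD0) hι0]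
  calc ‖Tinv ε (D ((F' u₀ (ι u₁) - F (ι u₁)) - (F' u₀ (ι u₂) - F (ι u₂))))‖
      ≤ M * ‖D ((F' u₀ (ι u₁) - F (ι u₁)) - (F' u₀ (ι u₂) - F (ι u₂)))‖ := by
        calc _ ≤ ‖Tinv ε‖ * _ := (Tinv ε).le_opNorm _
          _ ≤ M * _ := mul_le_mul_of_nonneg_right (hM ε hεIoc) (norm_nonneg _)
    _ ≤ M * (‖D‖ * ‖(F' u₀ (ι u₁) - F (ι u₁)) - (F' u₀ (ι u₂) - F (ι u₂))‖) :=
        mul_le_mul_of_nonneg_left (D.le_opNorm _) hM0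
    _ ≤ M * (‖D‖ * (κ * ‖ι u₁ - ι u₂‖)) := by
        refine mul_le_mul_of_nonneg_left (mul_le_mul_of_nonneg_left hMVT (norm_nonneg D)) hM0
    _ ≤ M * (‖D‖ * (κ * (‖ι‖ * ‖u₁ - u₂‖))) := by
        refine mul_le_mul_of_nonneg_left (mul_le_mul_of_nonneg_left
          (mul_le_mul_of_nonneg_left ?_ hκ.le) (norm_nonneg D)) hM0
        rw [← map_sub]
        exact ι.le_opNorm _
    _ = (M * ‖D‖ * κ * ‖ι‖) * ‖u₁ - u₂‖ := by ring
    _ ≤ (1/2) * ‖u₁ - u₂‖ := mul_le_mul_of_nonneg_right key (norm_nonneg _)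
end

section
/- In the abstract setting described in the context, there exist r₀ > 0 and ε₁ ∈ (0, ε₀] such that for every ε ∈ (0, ε₁] the map G_ε maps the closed ball {u ∈ U : ‖u − ū_ε‖_U ≤ r₀} into itself, and G_ε is a strict contraction with constant ½ on this ball. -/
open Filter Set

/-- abstract setting of Section 3 of the paper. There exist `r₀ > 0`
and `ε₁ ∈ (0, ε₀]` such that for every `ε ∈ (0, ε₁]` the map `G_ε` maps the closed ball
of radius `r₀` around `ū_ε` into itself and is a strict contraction with constant `1/2`
on this ball. -/
theorem abstract_selfmap_and_contraction
    {U X Y V : Type*}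
    [NormedAddCommGroup U] [NormedSpace ℝ U] [CompleteSpace U]
    [NormedAddCommGroup X] [NormedSpace ℝ X] [CompleteSpace X]
    [NormedAddCommGroup Y] [NormedSpace ℝ Y] [CompleteSpace Y]
    [NormedAddCommGroup V] [NormedSpace ℝ V] [CompleteSpace V]
    (ι : U →L[ℝ] X) (hι : Function.Injective ι)
    (D : Y →L[ℝ] V)
    (F : X → Y) (F' : X → (X →L[ℝ] Y))
    (hF : ∀ x, HasFDerivAt F (F' x) x) (hF' : Continuous F')
    (u₀ : X) (ε₀ : ℝ) (hε₀ : 0 < ε₀)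
    (A : ℝ → (U →L[ℝ] V)) (Tinv : ℝ → (V →L[ℝ] U))
    -- `T_ε := A_ε + D ∘ F'(u₀) ∘ ι` is bijective with inverse `Tinv ε` ...
    (hT : ∀ ε ∈ Ioc (0:ℝ) ε₀, ∀ u : U,
      Tinv ε ((A ε + D.comp ((F' u₀).comp ι)) u) = u)
    (hT' : ∀ ε ∈ Ioc (0:ℝ) ε₀, ∀ v : V,
      (A ε + D.comp ((F' u₀).comp ι)) (Tinv ε v) = v)
    -- ... uniformly bounded by `M`
    (M : ℝ) (hM : ∀ ε ∈ Ioc (0:ℝ) ε₀, ‖Tinv ε‖ ≤ M)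
    -- the approximate solutions `ū_ε`
    (ubar : ℝ → U)
    (hubar : Tendsto (fun ε => ‖ι (ubar ε) - u₀‖) (nhdsWithin 0 (Ioi 0)) (nhds 0))
    (hdelta : Tendsto (fun ε => ‖A ε (ubar ε) + D (F (ι (ubar ε)))‖)
      (nhdsWithin 0 (Ioi 0)) (nhds 0))
    -- the fixed point maps `G_ε`
    (G : ℝ → U → U)
    (hG : ∀ ε, ∀ u : U, G ε u = Tinv ε (D (F' u₀ (ι u) - F (ι u))))
    :
    ∃ r₀ > (0:ℝ), ∃ ε₁ ∈ Ioc (0:ℝ) ε₀, ∀ ε ∈ Ioc (0:ℝ) ε₁,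
      (∀ u : U, ‖u - ubar ε‖ ≤ r₀ → ‖G ε u - ubar ε‖ ≤ r₀) ∧
      (∀ u₁ u₂ : U, ‖u₁ - ubar ε‖ ≤ r₀ → ‖u₂ - ubar ε‖ ≤ r₀ →
        ‖G ε u₁ - G ε u₂‖ ≤ (1/2 : ℝ) * ‖u₁ - u₂‖) := by
  have hM0 : 0 ≤ M := le_trans (norm_nonneg _) (hM ε₀ ⟨hε₀, le_refl _⟩)
  -- contraction threshold
  set c : ℝ := 1 / (2 * (M * ‖D‖ * ‖ι‖ + 1)) with hc_def
  have hden : 0 < M * ‖D‖ * ‖ι‖ + 1 := by positivity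
  have hc_pos : 0 < c := by positivity
  -- from continuity of F' at u₀, choose ρ
  obtain ⟨δ', hδ'pos, hδ'⟩ := Metric.continuousAt_iff.1 (hF'.continuousAt (x := u₀)) c hc_pos
  set ρ : ℝ := δ' / 2 with hρ_def
  have hρpos : 0 < ρ := by positivity
  have hFρ : ∀ x : X, ‖x - u₀‖ ≤ ρ → ‖F' x - F' u₀‖ ≤ c := by
    intro x hx
    have : dist x u₀ < δ' := lt_of_le_of_lt (by simpa [dist_eq_norm] using hx) (by linarith)
    have := hδ' this
    rw [dist_eq_norm] at this
    exact this.le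
  set r₀ : ℝ := ρ / (2 * (‖ι‖ + 1)) with hr₀_def
  have hιden : 0 < ‖ι‖ + 1 := by positivity
  have hr₀pos : 0 < r₀ := by positivity
  refine ⟨r₀, hr₀pos, ?_⟩
  -- choose ε₁ from the two convergence hypotheses
  have h1 : ∀ᶠ ε in nhdsWithin (0:ℝ) (Ioi 0), ‖ι (ubar ε) - u₀‖ < ρ / 2 :=
    hubar.eventually_lt_const (by positivity)
  have h2 : ∀ᶠ ε in nhdsWithin (0:ℝ) (Ioi 0),
      ‖A ε (ubar ε) + D (F (ι (ubar ε)))‖ < r₀ / (2 * (M + 1)) :=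
    hdelta.eventually_lt_const (by positivity)
  obtain ⟨δ₂, hδ₂pos, hδ₂⟩ := Metric.mem_nhdsWithin_iff.1 (h1.and h2)
  refine ⟨min (δ₂ / 2) ε₀, ⟨lt_min (by positivity) hε₀, min_le_right _ _⟩, ?_⟩
  intro ε hε
  have hεε₀ : ε ∈ Ioc (0:ℝ) ε₀ := ⟨hε.1, hε.2.trans (min_le_right _ _)⟩
  have hεball : ε ∈ Metric.ball (0:ℝ) δ₂ ∩ Ioi 0 := by
    constructor
    · rw [Metric.mem_ball, dist_zero_right, Real.norm_eq_abs, abs_of_pos hε.1]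
      exact lt_of_le_of_lt (hε.2.trans (min_le_left _ _)) (by linarith)
    · exact hε.1
  obtain ⟨hub, hdel⟩ := hδ₂ hεball
  -- points in the ball are mapped into the ρ-ball around u₀ by ι
  have hball : ∀ u : U, ‖u - ubar ε‖ ≤ r₀ → ι u ∈ Metric.closedBall u₀ ρ := by
    intro u hu
    rw [Metric.mem_closedBall, dist_eq_norm]
    have h3 : ι u - u₀ = ι (u - ubar ε) + (ι (ubar ε) - u₀) := by
      rw [map_sub]; abel
    have h4 : ‖ι (u - ubar ε)‖ ≤ ‖ι‖ * r₀ :=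
      le_trans (ι.le_opNorm _) (mul_le_mul_of_nonneg_left hu (norm_nonneg _))
    have h5 : ‖ι‖ * r₀ ≤ ρ / 2 := by
      have heq5 : (‖ι‖ + 1) * r₀ = ρ / 2 := by
        rw [hr₀_def]; field_simp
      nlinarith [hr₀pos.le, norm_nonneg ι]
    calc ‖ι u - u₀‖ ≤ ‖ι (u - ubar ε)‖ + ‖ι (ubar ε) - u₀‖ := by
            rw [h3]; exact norm_add_le _ _
      _ ≤ ρ / 2 + ρ / 2 := add_le_add (h4.trans h5) hub.le
      _ = ρ := by ring
  -- the contraction estimate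
  have hcontr : ∀ u₁ u₂ : U, ‖u₁ - ubar ε‖ ≤ r₀ → ‖u₂ - ubar ε‖ ≤ r₀ →
      ‖G ε u₁ - G ε u₂‖ ≤ (1/2 : ℝ) * ‖u₁ - u₂‖ := by
    intro u₁ u₂ h₁ h₂
    have hx₁ := hball u₁ h₁
    have hx₂ := hball u₂ h₂
    have mvt : ‖F (ι u₁) - F (ι u₂) - (F' u₀) (ι u₁ - ι u₂)‖ ≤ c * ‖ι u₁ - ι u₂‖ :=
      (convex_closedBall u₀ ρ).norm_image_sub_le_of_norm_hasFDerivWithin_le'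
        (fun x _ => (hF x).hasFDerivWithinAt)
        (fun x hx => hFρ x (by simpa [dist_eq_norm] using Metric.mem_closedBall.1 hx))
        hx₂ hx₁
    have heq : G ε u₁ - G ε u₂ =
        Tinv ε (D (-(F (ι u₁) - F (ι u₂) - (F' u₀) (ι u₁ - ι u₂)))) := by
      rw [hG, hG, ← map_sub, ← map_sub]
      congr 1
      congr 1
      rw [map_sub (F' u₀)]
      abel
    have hbound : ‖G ε u₁ - G ε u₂‖ ≤ M * (‖D‖ * (c * ‖ι u₁ - ι u₂‖)) := by
      rw [heq]
      calc ‖Tinv ε (D (-(F (ι u₁) - F (ι u₂) - (F' u₀) (ι u₁ - ι u₂))))‖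

          ≤ ‖Tinv ε‖ * ‖D (-(F (ι u₁) - F (ι u₂) - (F' u₀) (ι u₁ - ι u₂)))‖ :=
            (Tinv ε).le_opNorm _
        _ ≤ M * ‖D (-(F (ι u₁) - F (ι u₂) - (F' u₀) (ι u₁ - ι u₂)))‖ :=
            mul_le_mul_of_nonneg_right (hM ε hεε₀) (norm_nonneg _)
        _ ≤ M * (‖D‖ * ‖-(F (ι u₁) - F (ι u₂) - (F' u₀) (ι u₁ - ι u₂))‖) :=
            mul_le_mul_of_nonneg_left (D.le_opNorm _) hM0
        _ ≤ M * (‖D‖ * (c * ‖ι u₁ - ι u₂‖)) := by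
            refine mul_le_mul_of_nonneg_left (mul_le_mul_of_nonneg_left ?_ (norm_nonneg _)) hM0
            rw [norm_neg]; exact mvt
    have hιbd : ‖ι u₁ - ι u₂‖ ≤ ‖ι‖ * ‖u₁ - u₂‖ := by
      rw [← map_sub]; exact ι.le_opNorm _
    have : M * (‖D‖ * (c * ‖ι u₁ - ι u₂‖)) ≤ (1/2 : ℝ) * ‖u₁ - u₂‖ := by
      have key : M * ‖D‖ * c * ‖ι‖ ≤ 1/2 := by
        rw [hc_def, mul_one_div, div_mul_eq_mul_div,
          div_le_div_iff₀ (by positivity) (by norm_num : (0:ℝ) < 2)]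
        nlinarith [norm_nonneg D, norm_nonneg ι, hM0]
      calc M * (‖D‖ * (c * ‖ι u₁ - ι u₂‖)) ≤ M * (‖D‖ * (c * (‖ι‖ * ‖u₁ - u₂‖))) := by
            refine mul_le_mul_of_nonneg_left (mul_le_mul_of_nonneg_left
              (mul_le_mul_of_nonneg_left hιbd hc_pos.le) (norm_nonneg _)) hM0
        _ = (M * ‖D‖ * c * ‖ι‖) * ‖u₁ - u₂‖ := by ring
        _ ≤ (1/2 : ℝ) * ‖u₁ - u₂‖ := mul_le_mul_of_nonneg_right key (norm_nonneg _)
    exact hbound.trans this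
  refine ⟨?_, hcontr⟩
  -- the self-map property
  intro u hu
  have hfix : ‖G ε (ubar ε) - ubar ε‖ ≤ r₀ / 2 := by
    have hub_eq : ubar ε = Tinv ε (A ε (ubar ε) + D ((F' u₀) (ι (ubar ε)))) := by
      have := hT ε hεε₀ (ubar ε)
      simpa using this.symm
    have heq : G ε (ubar ε) - ubar ε =
        Tinv ε (-(A ε (ubar ε) + D (F (ι (ubar ε))))) := by
      rw [hG]
      nth_rewrite 3 [hub_eq]
      rw [← map_sub]
      congr 1
      rw [map_sub]
      abel
    rw [heq]
    calc ‖Tinv ε (-(A ε (ubar ε) + D (F (ι (ubar ε)))))‖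
        ≤ ‖Tinv ε‖ * ‖-(A ε (ubar ε) + D (F (ι (ubar ε))))‖ := (Tinv ε).le_opNorm _
      _ ≤ M * ‖A ε (ubar ε) + D (F (ι (ubar ε)))‖ := by
          rw [norm_neg]; exact mul_le_mul_of_nonneg_right (hM ε hεε₀) (norm_nonneg _)
      _ ≤ M * (r₀ / (2 * (M + 1))) := mul_le_mul_of_nonneg_left hdel.le hM0
      _ ≤ r₀ / 2 := by
          rw [mul_div_assoc', div_le_div_iff₀ (by positivity) (by norm_num : (0:ℝ) < 2)]
          nlinarith [hr₀pos.le, hM0]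
  have h6 : G ε u - ubar ε = (G ε u - G ε (ubar ε)) + (G ε (ubar ε) - ubar ε) := by abel
  calc ‖G ε u - ubar ε‖ ≤ ‖G ε u - G ε (ubar ε)‖ + ‖G ε (ubar ε) - ubar ε‖ := by
        rw [h6]; exact norm_add_le _ _
    _ ≤ (1/2 : ℝ) * ‖u - ubar ε‖ + r₀ / 2 :=
        add_le_add (hcontr u (ubar ε) hu (by simp [hr₀pos.le])) hfix
    _ ≤ (1/2 : ℝ) * r₀ + r₀ / 2 := by nlinarith
    _ = r₀ := by ring
end

section
/- In the abstract setting described in the context, there exist r₀ > 0 and ε₁ ∈ (0, ε₀] such that for every ε ∈ (0, ε₁] there exists exactly one u_ε ∈ U with ‖u_ε − ū_ε‖_U ≤ r₀ and A_ε u_ε + D F(ι u_ε) = 0. -/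
/-!
With `T_ε = A_ε + D ∘ F'(u₀) ∘ ι` and the linearisation remainder `R = F - F'(u₀)`, the equation
reads `T_ε u + D (R (ι u)) = 0`, i.e. `u = -T_ε⁻¹ D R(ι u)`. Since `F` is `C¹`, `R` is
`κ`-Lipschitz near `u₀` for every `κ > 0`; choosing `κ` small against `M ‖D‖ ‖ι‖` makes this map a
`1/2`-contraction of a fixed ball of radius `r₀` around `ū_ε` (which `ι` sends close to `u₀` for
small `ε`), and it moves `ū_ε` by at most `M δ_ε ≤ r₀ / 2`. Banach's fixed point theorem on that
ball gives existence and uniqueness.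
-/

open Filter Set Metric Function Topology
open scoped NNReal

theorem existsUnique_isFixedPt_mem_closedBall_of_lipschitzOnWith {α : Type*} [MetricSpace α]
    [CompleteSpace α] {g : α → α} {c : α} {r : ℝ} {K : ℝ≥0} (hK : K < 1)
    (hg : LipschitzOnWith K g (closedBall c r)) (hc : dist (g c) c ≤ (1 - K) * r) :
    ∃! u, u ∈ closedBall c r ∧ IsFixedPt g u := by
  have hK' : (K : ℝ) < 1 := hK
  have hr : 0 ≤ r := nonneg_of_mul_nonneg_right (dist_nonneg.trans hc) (sub_pos.2 hK')
  have hmaps : MapsTo g (closedBall c r) (closedBall c r) := fun u hu => by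
    rw [mem_closedBall] at hu ⊢
    calc dist (g u) c ≤ dist (g u) (g c) + dist (g c) c := dist_triangle _ _ _
      _ ≤ K * dist u c + (1 - K) * r :=
        add_le_add (hg.dist_le_mul u hu c (mem_closedBall_self hr)) hc
      _ ≤ K * r + (1 - K) * r := by gcongr
      _ = r := by ring
  have : CompleteSpace (closedBall c r) := isClosed_closedBall.completeSpace_coe
  have : Nonempty (closedBall c r) := ⟨⟨c, mem_closedBall_self hr⟩⟩
  have hcontr : ContractingWith K (hmaps.restrict g _ _) := ⟨hK, hg.mapsToRestrict hmaps⟩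
  refine ⟨hcontr.fixedPoint, ⟨Subtype.coe_prop _, congrArg Subtype.val hcontr.fixedPoint_isFixedPt⟩,
    fun u ⟨hu, hfix⟩ => ?_⟩
  exact congrArg Subtype.val (hcontr.fixedPoint_unique (x := ⟨u, hu⟩) (Subtype.ext hfix))

theorem ContinuousLinearEquiv.existsUnique_mem_closedBall_add_eq_zero {𝕜 U V : Type*}
    [NontriviallyNormedField 𝕜] [NormedAddCommGroup U] [NormedSpace 𝕜 U] [CompleteSpace U]
    [NormedAddCommGroup V] [NormedSpace 𝕜 V] (e : U ≃L[𝕜] V) {Φ : U → V} {c : U} {r : ℝ}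
    {K : ℝ≥0} (hΦ : LipschitzOnWith K Φ (closedBall c r))
    (hK : ‖(e.symm : V →L[𝕜] U)‖ * K ≤ 1 / 2)
    (hc : ‖(e.symm : V →L[𝕜] U)‖ * ‖e c + Φ c‖ ≤ r / 2) :
    ∃! u, u ∈ closedBall c r ∧ e u + Φ u = 0 := by
  set S : V →L[𝕜] U := (e.symm : V →L[𝕜] U)
  have hfix : ∀ u, IsFixedPt (fun u => S (-Φ u)) u ↔ e u + Φ u = 0 := fun u => by
    rw [IsFixedPt, ContinuousLinearEquiv.coe_coe, e.symm_apply_eq, eq_comm, add_eq_zero_iff_eq_neg]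
  have hlip : LipschitzOnWith (1 / 2) (fun u => S (-Φ u)) (closedBall c r) :=
    (S.lipschitz.comp_lipschitzOnWith hΦ.neg).weaken (by rw [← NNReal.coe_le_coe]; simpa using hK)
  have hcentre : dist (S (-Φ c)) c ≤ (1 - ((1 / 2 : ℝ≥0) : ℝ)) * r := by
    have hSc : S (-Φ c) - c = S (-(e c + Φ c)) := by simp [S, sub_eq_add_neg, add_comm]
    calc dist (S (-Φ c)) c = ‖S (-(e c + Φ c))‖ := by rw [dist_eq_norm, hSc]
      _ ≤ ‖S‖ * ‖e c + Φ c‖ := by simpa only [norm_neg] using S.le_opNorm (-(e c + Φ c))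
      _ ≤ r / 2 := hc
      _ = (1 - ((1 / 2 : ℝ≥0) : ℝ)) * r := by push_cast; ring
  simpa only [hfix] using
    existsUnique_isFixedPt_mem_closedBall_of_lipschitzOnWith (by norm_num) hlip hcentre

theorem HasStrictFDerivAt.exists_lipschitzOnWith_sub_closedBall {𝕜 E F : Type*}
    [NontriviallyNormedField 𝕜] [NormedAddCommGroup E] [NormedSpace 𝕜 E]
    [NormedAddCommGroup F] [NormedSpace 𝕜 F] {f : E → F} {f' : E →L[𝕜] F} {a : E}
    (hf : HasStrictFDerivAt f f' a) {κ : ℝ≥0} (hκ : 0 < κ) :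
    ∃ ρ > 0, LipschitzOnWith κ (f - ⇑f') (closedBall a ρ) := by
  obtain ⟨s, hs, hfs⟩ := hf.approximates_deriv_on_nhds (Or.inr hκ)
  obtain ⟨ρ, hρ, hρs⟩ := nhds_basis_closedBall.mem_iff.1 hs
  exact ⟨ρ, hρ, (hfs.mono_set hρs).lipschitzOnWith⟩

theorem exists_mem_Ioc_forall_mem_Ioc_of_eventually_nhdsGT {α : Type*} [LinearOrder α]
    [TopologicalSpace α] [OrderTopology α] [NoMaxOrder α] [DenselyOrdered α] {p : α → Prop}
    {a b : α} (hab : a < b) (h : ∀ᶠ x in 𝓝[>] a, p x) :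
    ∃ c ∈ Ioc a b, ∀ x ∈ Ioc a c, p x := by
  obtain ⟨u, hu, hsub⟩ := mem_nhdsGT_iff_exists_Ioc_subset.1 h
  exact ⟨min u b, ⟨lt_min hu hab, min_le_right _ _⟩,
    fun x hx => hsub ⟨hx.1, hx.2.trans (min_le_left _ _)⟩⟩

theorem existsUnique_norm_sub_le_and_add_comp_eq_zero {𝕜 U X Y V : Type*}
    [NontriviallyNormedField 𝕜] [NormedAddCommGroup U] [NormedSpace 𝕜 U] [CompleteSpace U]
    [NormedAddCommGroup X] [NormedSpace 𝕜 X] [NormedAddCommGroup Y] [NormedSpace 𝕜 Y]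
    [NormedAddCommGroup V] [NormedSpace 𝕜 V] (ι : U →L[𝕜] X) (D : Y →L[𝕜] V) {F : X → Y}
    {L : X →L[𝕜] Y} {A : U →L[𝕜] V} {S : V →L[𝕜] U}
    (hST : ∀ u, S ((A + D.comp (L.comp ι)) u) = u) (hTS : ∀ v, (A + D.comp (L.comp ι)) (S v) = v)
    {M : ℝ} (hS : ‖S‖ ≤ M) {x₀ : X} {ρ : ℝ} {κ : ℝ≥0}
    (hR : LipschitzOnWith κ (F - ⇑L) (closedBall x₀ ρ)) (hκ : M * ‖D‖ * ‖ι‖ * κ ≤ 1 / 2)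
    {c : U} {r : ℝ} (hcρ : ‖ι‖ * r + ‖ι c - x₀‖ ≤ ρ) (hc : M * ‖A c + D (F (ι c))‖ ≤ r / 2) :
    ∃! u, ‖u - c‖ ≤ r ∧ A u + D (F (ι u)) = 0 := by
  set e := ContinuousLinearEquiv.equivOfInverse _ S hST hTS
  set Φ : U → V := D ∘ (F - ⇑L) ∘ ι
  have he : ∀ u, e u + Φ u = A u + D (F (ι u)) := fun u => by simp [e, Φ]
  have hιball : MapsTo ι (closedBall c r) (closedBall x₀ ρ) :=
    (ι.lipschitz.mapsTo_closedBall _ _).mono_right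
      (closedBall_subset_closedBall' (by rwa [dist_eq_norm, coe_nnnorm]))
  have hΦ : LipschitzOnWith (‖D‖₊ * (κ * ‖ι‖₊)) Φ (closedBall c r) :=
    D.lipschitz.comp_lipschitzOnWith (hR.comp ι.lipschitz.lipschitzOnWith hιball)
  have hK : ‖(e.symm : V →L[𝕜] U)‖ * (‖D‖₊ * (κ * ‖ι‖₊) : ℝ≥0) ≤ 1 / 2 := by
    push_cast
    calc _ ≤ M * (‖D‖ * (κ * ‖ι‖)) := by gcongr; exact hS
      _ ≤ 1 / 2 := by linarith
  have hec : ‖(e.symm : V →L[𝕜] U)‖ * ‖e c + Φ c‖ ≤ r / 2 := by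
    rw [he]
    exact (mul_le_mul_of_nonneg_right hS (norm_nonneg _)).trans hc
  simpa only [mem_closedBall_iff_norm, he] using e.existsUnique_mem_closedBall_add_eq_zero hΦ hK hec

theorem abstract_existence_local_uniqueness_general
    {U X Y V : Type*}
    [NormedAddCommGroup U] [NormedSpace ℝ U] [CompleteSpace U]
    [NormedAddCommGroup X] [NormedSpace ℝ X]
    [NormedAddCommGroup Y] [NormedSpace ℝ Y]
    [NormedAddCommGroup V] [NormedSpace ℝ V]
    (ι : U →L[ℝ] X)
    (D : Y →L[ℝ] V)
    (F : X → Y) (F' : X → (X →L[ℝ] Y))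
    (hF : ∀ x, HasFDerivAt F (F' x) x) (hF' : Continuous F')
    (u₀ : X) (ε₀ : ℝ) (hε₀ : 0 < ε₀)
    (A : ℝ → (U →L[ℝ] V)) (Tinv : ℝ → (V →L[ℝ] U))
    -- `T_ε := A_ε + D ∘ F'(u₀) ∘ ι` is bijective with inverse `Tinv ε` ...
    (hT : ∀ ε ∈ Ioc (0:ℝ) ε₀, ∀ u : U,
      Tinv ε ((A ε + D.comp ((F' u₀).comp ι)) u) = u)
    (hT' : ∀ ε ∈ Ioc (0:ℝ) ε₀, ∀ v : V,
      (A ε + D.comp ((F' u₀).comp ι)) (Tinv ε v) = v)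
    -- ... uniformly bounded by `M`
    (M : ℝ) (hM : ∀ ε ∈ Ioc (0:ℝ) ε₀, ‖Tinv ε‖ ≤ M)
    -- the approximate solutions `ū_ε`
    (ubar : ℝ → U)
    (hubar : Tendsto (fun ε => ‖ι (ubar ε) - u₀‖) (nhdsWithin 0 (Ioi 0)) (nhds 0))
    (hdelta : Tendsto (fun ε => ‖A ε (ubar ε) + D (F (ι (ubar ε)))‖)
      (nhdsWithin 0 (Ioi 0)) (nhds 0))
    :
    ∃ r₀ > (0:ℝ), ∃ ε₁ ∈ Ioc (0:ℝ) ε₀, ∀ ε ∈ Ioc (0:ℝ) ε₁,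
      ∃! u : U, ‖u - ubar ε‖ ≤ r₀ ∧ A ε u + D (F (ι u)) = 0 := by
  obtain ⟨κ, hκ0, hκ⟩ := exists_pos_mul_lt (one_half_pos : (0 : ℝ) < 1 / 2) (M * ‖D‖ * ‖ι‖)
  lift κ to ℝ≥0 using hκ0.le
  obtain ⟨ρ, hρ0, hR⟩ := (hasStrictFDerivAt_of_hasFDerivAt_of_continuousAt
    (.of_forall hF) (hF'.continuousAt (x := u₀))).exists_lipschitzOnWith_sub_closedBall
      (κ := κ) (by exact_mod_cast hκ0)
  obtain ⟨r₀, hr₀0, hr₀⟩ := exists_pos_mul_lt (half_pos hρ0) ‖ι‖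
  have hMdelta : Tendsto (fun ε => M * ‖A ε (ubar ε) + D (F (ι (ubar ε)))‖) (𝓝[>] 0) (𝓝 0) := by
    simpa using hdelta.const_mul M
  have hev : ∀ᶠ ε in 𝓝[>] 0, ‖ι (ubar ε) - u₀‖ < ρ / 2 ∧
      M * ‖A ε (ubar ε) + D (F (ι (ubar ε)))‖ < r₀ / 2 :=
    (hubar.eventually_lt_const (half_pos hρ0)).and (hMdelta.eventually_lt_const (half_pos hr₀0))
  obtain ⟨ε₁, hε₁, hε₁ev⟩ := exists_mem_Ioc_forall_mem_Ioc_of_eventually_nhdsGT hε₀ hev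
  refine ⟨r₀, hr₀0, ε₁, hε₁, fun ε hε => ?_⟩
  have hε' : ε ∈ Ioc 0 ε₀ := ⟨hε.1, hε.2.trans hε₁.2⟩
  obtain ⟨hubarε, hdeltaε⟩ := hε₁ev ε hε
  exact existsUnique_norm_sub_le_and_add_comp_eq_zero ι D (hT ε hε') (hT' ε hε') (hM ε hε') hR
    hκ.le (by linarith) hdeltaε.le

/-- Theorem 3.3 of the paper, existence and local uniqueness, abstract
setting. There exist `r₀ > 0` and `ε₁ ∈ (0, ε₀]` such that for every `ε ∈ (0, ε₁]` there
is exactly one `u_ε ∈ U` with `‖u_ε - ū_ε‖ ≤ r₀` and `A_ε u_ε + D F(ι u_ε) = 0`. -/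
theorem abstract_existence_local_uniqueness
    {U X Y V : Type*}
    [NormedAddCommGroup U] [NormedSpace ℝ U] [CompleteSpace U]
    [NormedAddCommGroup X] [NormedSpace ℝ X] [CompleteSpace X]
    [NormedAddCommGroup Y] [NormedSpace ℝ Y] [CompleteSpace Y]
    [NormedAddCommGroup V] [NormedSpace ℝ V] [CompleteSpace V]
    (ι : U →L[ℝ] X) (hι : Function.Injective ι)
    (D : Y →L[ℝ] V)
    (F : X → Y) (F' : X → (X →L[ℝ] Y))
    (hF : ∀ x, HasFDerivAt F (F' x) x) (hF' : Continuous F')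
    (u₀ : X) (ε₀ : ℝ) (hε₀ : 0 < ε₀)
    (A : ℝ → (U →L[ℝ] V)) (Tinv : ℝ → (V →L[ℝ] U))
    -- `T_ε := A_ε + D ∘ F'(u₀) ∘ ι` is bijective with inverse `Tinv ε` ...
    (hT : ∀ ε ∈ Ioc (0:ℝ) ε₀, ∀ u : U,
      Tinv ε ((A ε + D.comp ((F' u₀).comp ι)) u) = u)
    (hT' : ∀ ε ∈ Ioc (0:ℝ) ε₀, ∀ v : V,
      (A ε + D.comp ((F' u₀).comp ι)) (Tinv ε v) = v)
    -- ... uniformly bounded by `M`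
    (M : ℝ) (hM : ∀ ε ∈ Ioc (0:ℝ) ε₀, ‖Tinv ε‖ ≤ M)
    -- the approximate solutions `ū_ε`
    (ubar : ℝ → U)
    (hubar : Tendsto (fun ε => ‖ι (ubar ε) - u₀‖) (nhdsWithin 0 (Ioi 0)) (nhds 0))
    (hdelta : Tendsto (fun ε => ‖A ε (ubar ε) + D (F (ι (ubar ε)))‖)
      (nhdsWithin 0 (Ioi 0)) (nhds 0))
    -- the fixed point maps `G_ε`
    (G : ℝ → U → U)
    (hG : ∀ ε, ∀ u : U, G ε u = Tinv ε (D (F' u₀ (ι u) - F (ι u))))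
    :
    ∃ r₀ > (0:ℝ), ∃ ε₁ ∈ Ioc (0:ℝ) ε₀, ∀ ε ∈ Ioc (0:ℝ) ε₁,
      ∃! u : U, ‖u - ubar ε‖ ≤ r₀ ∧ A ε u + D (F (ι u)) = 0 :=
  abstract_existence_local_uniqueness_general ι D F F' hF hF' u₀ ε₀ hε₀ A Tinv hT hT' M hM ubar
    hubar hdelta
end

section
/- In the abstract setting described in the context, let r₀ > 0, ε₁ ∈ (0, ε₀] and, for ε ∈ (0, ε₁], u_ε ∈ U be as in the existence statement, i.e. u_ε is the unique solution of A_ε u + D F(ι u) = 0 with ‖u − ū_ε‖_U ≤ r₀. Then there exist ε₂ ∈ (0, ε₁] and ρ > 0 such that for every ε ∈ (0, ε₂] and every u ∈ U satisfying A_ε u + D F(ι u) = 0 and ‖ι u − u₀‖_X < ρ, one has u = u_ε. In other words, for small ε the solution is unique among all u ∈ U whose image ι u is close to u₀ in the X-norm, not merely among u close to ū_ε in the U-norm. -/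
open Filter Set

/-- final uniqueness assertion in the proof of Theorem 3.3 of the
paper, abstract setting. With `r₀`, `ε₁` and the solution family `u_ε` as in the
existence statement, there are `ε₂ ∈ (0, ε₁]` and `ρ > 0` such that for every
`ε ∈ (0, ε₂]`, every solution `u ∈ U` of `A_ε u + D F(ι u) = 0` with
`‖ι u - u₀‖_X < ρ` coincides with `u_ε`: the solution is unique among all `u` whose
image `ι u` is close to `u₀` in the `X`-norm. -/
theorem abstract_uniqueness_in_X_norm
    {U X Y V : Type*}
    [NormedAddCommGroup U] [NormedSpace ℝ U] [CompleteSpace U]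
    [NormedAddCommGroup X] [NormedSpace ℝ X] [CompleteSpace X]
    [NormedAddCommGroup Y] [NormedSpace ℝ Y] [CompleteSpace Y]
    [NormedAddCommGroup V] [NormedSpace ℝ V] [CompleteSpace V]
    (ι : U →L[ℝ] X) (hι : Function.Injective ι)
    (D : Y →L[ℝ] V)
    (F : X → Y) (F' : X → (X →L[ℝ] Y))
    (hF : ∀ x, HasFDerivAt F (F' x) x) (hF' : Continuous F')
    (u₀ : X) (ε₀ : ℝ) (hε₀ : 0 < ε₀)
    (A : ℝ → (U →L[ℝ] V)) (Tinv : ℝ → (V →L[ℝ] U))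
    -- `T_ε := A_ε + D ∘ F'(u₀) ∘ ι` is bijective with inverse `Tinv ε` ...
    (hT : ∀ ε ∈ Ioc (0:ℝ) ε₀, ∀ u : U,
      Tinv ε ((A ε + D.comp ((F' u₀).comp ι)) u) = u)
    (hT' : ∀ ε ∈ Ioc (0:ℝ) ε₀, ∀ v : V,
      (A ε + D.comp ((F' u₀).comp ι)) (Tinv ε v) = v)
    -- ... uniformly bounded by `M`
    (M : ℝ) (hM : ∀ ε ∈ Ioc (0:ℝ) ε₀, ‖Tinv ε‖ ≤ M)
    -- the approximate solutions `ub_ε`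
    (ubar : ℝ → U)
    (hubar : Tendsto (fun ε => ‖ι (ubar ε) - u₀‖) (nhdsWithin 0 (Ioi 0)) (nhds 0))
    (hdelta : Tendsto (fun ε => ‖A ε (ubar ε) + D (F (ι (ubar ε)))‖)
      (nhdsWithin 0 (Ioi 0)) (nhds 0))
    -- the fixed point maps `G_ε`
    (G : ℝ → U → U)
    (hG : ∀ ε, ∀ u : U, G ε u = Tinv ε (D (F' u₀ (ι u) - F (ι u))))
    -- `r₀`, `ε₁` as in the existence statement
    (r₀ : ℝ) (hr₀ : 0 < r₀) (ε₁ : ℝ) (hε₁ : ε₁ ∈ Ioc (0:ℝ) ε₀)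
    (hself : ∀ ε ∈ Ioc (0:ℝ) ε₁, ∀ u : U, ‖u - ubar ε‖ ≤ r₀ → ‖G ε u - ubar ε‖ ≤ r₀)
    (hcontr : ∀ ε ∈ Ioc (0:ℝ) ε₁, ∀ u₁ u₂ : U, ‖u₁ - ubar ε‖ ≤ r₀ → ‖u₂ - ubar ε‖ ≤ r₀ →
      ‖G ε u₁ - G ε u₂‖ ≤ (1/2 : ℝ) * ‖u₁ - u₂‖)
    -- the family of solutions `u_ε` in the ball
    (uε : ℝ → U)
    (huε : ∀ ε ∈ Ioc (0:ℝ) ε₁,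
      ‖uε ε - ubar ε‖ ≤ r₀ ∧ A ε (uε ε) + D (F (ι (uε ε))) = 0)
    (huniq : ∀ ε ∈ Ioc (0:ℝ) ε₁, ∀ u : U,
      ‖u - ubar ε‖ ≤ r₀ → A ε u + D (F (ι u)) = 0 → u = uε ε) :
    ∃ ε₂ ∈ Ioc (0:ℝ) ε₁, ∃ ρ > (0:ℝ), ∀ ε ∈ Ioc (0:ℝ) ε₂, ∀ u : U,
      A ε u + D (F (ι u)) = 0 → ‖ι u - u₀‖ < ρ → u = uε ε := by
  have hM0 : (0:ℝ) ≤ M := le_trans (norm_nonneg _) (hM ε₁ hε₁)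
  have hdD0 : (0:ℝ) ≤ ‖D‖ := norm_nonneg _
  set dD := ‖D‖ with hdDdef
  have hηpos : (0:ℝ) < 1/(2*(dD*M+1)) := by positivity
  set η := 1/(2*(dD*M+1)) with hηdef
  obtain ⟨δc, hδc, hcont⟩ := Metric.continuousAt_iff.mp (hF'.continuousAt (x := u₀)) η hηpos
  set ρ := min (r₀/2) (δc/2) with hρdef
  have hρpos : 0 < ρ := lt_min (by linarith) (by linarith)
  have hρr : ρ ≤ r₀/2 := min_le_left _ _
  have hρδ : ρ ≤ δc/2 := min_le_right _ _
  have hev : ∀ᶠ ε in nhdsWithin (0:ℝ) (Ioi 0),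
      ‖ι (ubar ε) - u₀‖ ≤ ρ ∧ ‖A ε (ubar ε) + D (F (ι (ubar ε)))‖ ≤ r₀/(2*(M+1)) := by
    have h1 := hubar.eventually_lt_const hρpos
    have h2 := hdelta.eventually_lt_const (show (0:ℝ) < r₀/(2*(M+1)) by positivity)
    filter_upwards [h1, h2] with ε h1 h2
    exact ⟨h1.le, h2.le⟩
  obtain ⟨b, hb, hsub⟩ := mem_nhdsGT_iff_exists_Ioc_subset.mp hev
  refine ⟨min b ε₁, ⟨lt_min hb hε₁.1, min_le_right _ _⟩, ρ, hρpos, ?_⟩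
  intro ε hε u hsol hclose
  have hεε₁ : ε ∈ Ioc (0:ℝ) ε₁ := ⟨hε.1, hε.2.trans (min_le_right _ _)⟩
  have hεε₀ : ε ∈ Ioc (0:ℝ) ε₀ := ⟨hε.1, hεε₁.2.trans hε₁.2⟩
  obtain ⟨hbar_close, hbar_res⟩ := hsub ⟨hε.1, hε.2.trans (min_le_left _ _)⟩
  set ub := ubar ε with hubdef
  -- fixed-point representations of `u` and `ub` coming from `Tinv`
  have hTu := hT ε hεε₀ u
  have hTub := hT ε hεε₀ ub
  simp only [ContinuousLinearMap.add_apply, ContinuousLinearMap.coe_comp',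
    Function.comp_apply] at hTu hTub
  -- the mean value estimate
  set q : Y := F (ι u) - F (ι ub) - (F' u₀) (ι u - ι ub) with hqdef
  have hmemu : ι u ∈ Metric.closedBall u₀ ρ := by
    rw [Metric.mem_closedBall, dist_eq_norm]; exact hclose.le
  have hmemub : ι ub ∈ Metric.closedBall u₀ ρ := by
    rw [Metric.mem_closedBall, dist_eq_norm]; exact hbar_close
  have hq : ‖q‖ ≤ η * ‖ι u - ι ub‖ := by
    refine Convex.norm_image_sub_le_of_norm_hasFDerivWithin_le'
      (f := F) (f' := F') (φ := F' u₀) (s := Metric.closedBall u₀ ρ)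
      (fun x _ => (hF x).hasFDerivWithinAt) ?_ (convex_closedBall _ _) hmemub hmemu
    intro x hx
    have hxd : dist x u₀ < δc := by
      rw [Metric.mem_closedBall] at hx
      calc dist x u₀ ≤ ρ := hx
        _ < δc := by linarith
    have := hcont hxd
    rw [dist_eq_norm] at this
    exact this.le
  have hdist : ‖ι u - ι ub‖ ≤ 2 * ρ := by
    have h1 : ι u - ι ub = (ι u - u₀) - (ι ub - u₀) := by abel
    rw [h1]
    calc ‖(ι u - u₀) - (ι ub - u₀)‖ ≤ ‖ι u - u₀‖ + ‖ι ub - u₀‖ := norm_sub_le _ _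
      _ ≤ 2 * ρ := by linarith [hclose.le]
  -- representation of the difference
  have hAu : A ε u = -(D (F (ι u))) := eq_neg_of_add_eq_zero_left hsol
  have harg : A ε u + D (F' u₀ (ι u)) = D (F' u₀ (ι u)) - D (F (ι u)) := by
    rw [hAu]; abel
  have hu_eq : u = Tinv ε (D (F' u₀ (ι u)) - D (F (ι u))) := by
    rw [← harg, hTu]
  have hub_eq : ub = Tinv ε (A ε ub + D (F' u₀ (ι ub))) := hTub.symm
  have hdiff : u - ub
      = Tinv ε (-(D q) - (A ε ub + D (F (ι ub)))) := by
    conv_lhs => rw [hu_eq, hub_eq]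
    rw [← map_sub]
    congr 1
    simp only [hqdef, map_sub]
    abel
  -- norm estimates
  have hnorm1 : ‖u - ub‖ ≤ M * ‖-(D q) - (A ε ub + D (F (ι ub)))‖ := by
    rw [hdiff]
    calc ‖Tinv ε (-(D q) - (A ε ub + D (F (ι ub))))‖
        ≤ ‖Tinv ε‖ * ‖-(D q) - (A ε ub + D (F (ι ub)))‖ := (Tinv ε).le_opNorm _
      _ ≤ M * ‖-(D q) - (A ε ub + D (F (ι ub)))‖ :=
          mul_le_mul_of_nonneg_right (hM ε hεε₀) (norm_nonneg _)
  have hnorm2 : ‖-(D q) - (A ε ub + D (F (ι ub)))‖ ≤ dD * (η * (2*ρ)) + r₀/(2*(M+1)) := by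
    calc ‖-(D q) - (A ε ub + D (F (ι ub)))‖
        ≤ ‖-(D q)‖ + ‖A ε ub + D (F (ι ub))‖ := norm_sub_le _ _
      _ = ‖D q‖ + ‖A ε ub + D (F (ι ub))‖ := by rw [norm_neg]
      _ ≤ dD * ‖q‖ + r₀/(2*(M+1)) := add_le_add (D.le_opNorm _) hbar_res
      _ ≤ dD * (η * (2*ρ)) + r₀/(2*(M+1)) := by
          gcongr
          calc ‖q‖ ≤ η * ‖ι u - ι ub‖ := hq
            _ ≤ η * (2*ρ) := by gcongr
  have hball : ‖u - ub‖ ≤ r₀ := by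
    have h1 : M * (dD * (η * (2*ρ))) ≤ ρ := by
      rw [hηdef]
      rw [show M * (dD * (1/(2*(dD*M+1)) * (2*ρ))) = (M * dD * (2*ρ)) / (2*(dD*M+1)) by ring]
      rw [div_le_iff₀ (by positivity)]
      nlinarith [mul_nonneg hdD0 hM0, hρpos.le]
    have h2 : M * (r₀/(2*(M+1))) ≤ r₀/2 := by
      rw [show M * (r₀/(2*(M+1))) = (M * r₀) / (2*(M+1)) by ring]
      rw [div_le_div_iff₀ (by positivity) (by norm_num)]
      nlinarith
    calc ‖u - ub‖ ≤ M * (dD * (η * (2*ρ)) + r₀/(2*(M+1))) := hnorm1.trans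
          (mul_le_mul_of_nonneg_left hnorm2 hM0)
      _ = M * (dD * (η * (2*ρ))) + M * (r₀/(2*(M+1))) := by ring
      _ ≤ ρ + r₀/2 := add_le_add h1 h2
      _ ≤ r₀ := by linarith
  exact huniq ε hεε₁ u hball hsol
end
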